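/- arXiv:1606.09309 — 3 statements merged into one kernel-verified Lean document; each statement's English description precedes it below -/
import Mathlib

section
/- Let s, b ≥ 1 be fixed integers and let {a_n} be the (s,b)-Generacci sequence. Then for all n > (s+1)b + 1, the sequence satisfies the recurrence a_n = a_{n−b} + b·a_{n−(s+1)b}. -/
open scoped BigOperators

/-- Bin index (1-indexed) of position `ℓ` when bins have size `b`: `⌈ℓ/b⌉`. -/
def binIdx (b ℓ : ℕ) : ℕ := (ℓ + b - 1) / b

/-- A finite set of indices is `(s,b)`-legal if the bin indices of any two distinct
elements differ by more than `s`. -/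
def SBLegal (s b : ℕ) (L : Finset ℕ) : Prop :=
  ∀ i ∈ L, ∀ j ∈ L, i ≠ j →
    s < max (binIdx b i) (binIdx b j) - min (binIdx b i) (binIdx b j)

/-- `m` has an `(s,b)`-Generacci legal decomposition using only `a_1, …, a_{i-1}`. -/
def SBRepr (s b : ℕ) (a : ℕ → ℕ) (i m : ℕ) : Prop :=
  ∃ L : Finset ℕ, (∀ j ∈ L, 1 ≤ j ∧ j < i) ∧ SBLegal s b L ∧ (∑ j ∈ L, a j) = m

/-- `a` (1-indexed) is the `(s,b)`-Generacci sequence: an increasing sequence of positive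
integers in which each `a i` is the smallest positive integer having no `(s,b)`-Generacci
legal decomposition using elements of `{a_1, …, a_{i-1}}`. -/
def IsGeneracci (s b : ℕ) (a : ℕ → ℕ) : Prop :=
  (∀ i, 1 ≤ i → a i < a (i + 1)) ∧
  ∀ i, 1 ≤ i → IsLeast {m : ℕ | 0 < m ∧ ¬ SBRepr s b a i m} (a i)

/-! Let `r(j) = (⌈j/b⌉ - s - 1) b` be the largest index that may accompany `a_j` as a smaller
summand. A legal decomposition using `a_1, …, a_j` either avoids `a_j` or is `a_j` plus a legal
decomposition using `a_1, …, a_{r(j)}`. By induction, every legal decomposition using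
`a_1, …, a_{i-1}` sums to less than `a_i`, and minimality then gives `a_{j+1} = a_j + a_{r(j)+1}`.
Hence `a` is arithmetic on each bin, with common difference `a_{(k-s)b+1}` on bin `k+1` (where
`k - s` is read as `0` for `k ≤ s`); five instances of this identity combine to the recurrence. -/

/-- The largest index that may accompany `j` as a smaller summand in a legal decomposition;
it is `0` (no companion at all) when `j` lies in one of the first `s + 1` bins. -/
def sbReach (s b j : ℕ) : ℕ := (binIdx b j - (s + 1)) * b

section binIdx

variable {b : ℕ}

lemma binIdx_le_iff (hb : 0 < b) {ℓ t : ℕ} : binIdx b ℓ ≤ t ↔ ℓ ≤ t * b := by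
  rw [binIdx, Nat.div_le_iff_le_mul_add_pred hb, mul_comm]
  omega

lemma binIdx_mono : Monotone (binIdx b) :=
  fun _ _ h => Nat.div_le_div_right (by omega)

lemma binIdx_mul_add (hb : 0 < b) {k r : ℕ} (hr : 0 < r) (hrb : r ≤ b) :
    binIdx b (k * b + r) = k + 1 := by
  have hle : binIdx b (k * b + r) ≤ k + 1 := (binIdx_le_iff hb).2 (by rw [add_mul]; omega)
  have hgt : ¬ binIdx b (k * b + r) ≤ k := by rw [binIdx_le_iff hb]; omega
  omega

variable {s : ℕ}

lemma le_sbReach_iff (hb : 0 < b) {j ℓ : ℕ} (hℓ : 0 < ℓ) :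
    ℓ ≤ sbReach s b j ↔ binIdx b ℓ + s < binIdx b j := by
  have hpos : ¬ binIdx b ℓ ≤ 0 := by rw [binIdx_le_iff hb]; omega
  rw [sbReach, ← binIdx_le_iff hb]
  omega

lemma sbReach_lt (hb : 0 < b) {j : ℕ} (hj : 0 < j) : sbReach s b j < j :=
  not_le.1 fun h => by have := (le_sbReach_iff hb hj).1 h; omega

lemma sbReach_mul_add (hb : 0 < b) {k r : ℕ} (hr : 0 < r) (hrb : r ≤ b) :
    sbReach s b (k * b + r) = (k - s) * b := by
  rw [sbReach, binIdx_mul_add hb hr hrb]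
  congr 1
  omega

end binIdx

section legal

variable {s b : ℕ} {L : Finset ℕ}

lemma SBLegal.subset (hL : SBLegal s b L) {L' : Finset ℕ} (h : L' ⊆ L) : SBLegal s b L' :=
  fun i hi j hj hij => hL i (h hi) j (h hj) hij

lemma SBLegal.binIdx_add_lt (hL : SBLegal s b L) {i j : ℕ} (hi : i ∈ L) (hj : j ∈ L)
    (hij : i < j) : binIdx b i + s < binIdx b j := by
  have := hL i hi j hj hij.ne
  have := binIdx_mono (b := b) hij.le
  omega

lemma SBLegal.insert (hL : SBLegal s b L) {j : ℕ}
    (hj : ∀ i ∈ L, binIdx b i + s < binIdx b j) : SBLegal s b (insert j L) := by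
  intro x hx y hy hxy
  rcases Finset.mem_insert.1 hx with rfl | hxL <;> rcases Finset.mem_insert.1 hy with rfl | hyL
  · exact absurd rfl hxy
  · have := hj y hyL; omega
  · have := hj x hxL; omega
  · exact hL x hxL y hyL hxy

end legal

section repr

variable {s b : ℕ} {a : ℕ → ℕ}

lemma SBRepr.eq_zero_of_one {m : ℕ} (h : SBRepr s b a 1 m) : m = 0 := by
  obtain ⟨L, hL, -, rfl⟩ := h
  exact Finset.sum_eq_zero fun j hj => absurd (hL j hj) (by omega)

lemma SBRepr.apply_add (hb : 0 < b) {j m : ℕ} (hj : 0 < j)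
    (h : SBRepr s b a (sbReach s b j + 1) m) : SBRepr s b a (j + 1) (a j + m) := by
  obtain ⟨L, hL, hleg, rfl⟩ := h
  have hLj : ∀ ℓ ∈ L, 0 < ℓ ∧ ℓ ≤ sbReach s b j := fun ℓ hℓ => by have := hL ℓ hℓ; omega
  have hreach := sbReach_lt (s := s) hb hj
  have hjL : j ∉ L := fun h => by have := hLj j h; omega
  refine ⟨insert j L, fun ℓ hℓ => ?_, hleg.insert fun ℓ hℓ => ?_,
    Finset.sum_insert hjL⟩
  · rcases Finset.mem_insert.1 hℓ with rfl | hℓ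
    · omega
    · have := hLj ℓ hℓ; omega
  · exact (le_sbReach_iff hb (hLj ℓ hℓ).1).1 (hLj ℓ hℓ).2

lemma SBRepr.succ_cases (hb : 0 < b) {j m : ℕ} (h : SBRepr s b a (j + 1) m) :
    SBRepr s b a j m ∨ ∃ m', SBRepr s b a (sbReach s b j + 1) m' ∧ m = a j + m' := by
  obtain ⟨L, hL, hleg, rfl⟩ := h
  by_cases hjL : j ∈ L
  · refine .inr ⟨_, ⟨L.erase j, fun ℓ hℓ => ?_, hleg.subset (L.erase_subset j), rfl⟩,
      (L.add_sum_erase a hjL).symm⟩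
    obtain ⟨hℓj, hℓL⟩ := Finset.mem_erase.1 hℓ
    have hℓ := hL ℓ hℓL
    have hbin := hleg.binIdx_add_lt hℓL hjL (by omega)
    have := (le_sbReach_iff hb hℓ.1).2 hbin
    omega
  · refine .inl ⟨L, fun ℓ hℓ => ?_, hleg, rfl⟩
    have : ℓ ≠ j := fun h => hjL (h ▸ hℓ)
    have := hL ℓ hℓ
    omega

end repr

namespace IsGeneracci

variable {s b : ℕ} {a : ℕ → ℕ}

lemma sbRepr_of_lt (ha : IsGeneracci s b a) {i m : ℕ} (hi : 0 < i) (hm : 0 < m)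
    (h : m < a i) : SBRepr s b a i m :=
  not_not.1 fun hc => (ha.2 i hi).2 ⟨hm, hc⟩ |>.not_gt h

lemma add_le_succ (ha : IsGeneracci s b a) (hb : 0 < b) {j : ℕ} (hj : 0 < j) :
    a j + a (sbReach s b j + 1) ≤ a (j + 1) := by
  by_contra! h
  have hstep := ha.1 j hj
  have hr : SBRepr s b a (sbReach s b j + 1) (a (j + 1) - a j) :=
    ha.sbRepr_of_lt (by omega) (by omega) (by omega)
  have := hr.apply_add hb hj
  rw [Nat.add_sub_cancel' hstep.le] at this
  exact (ha.2 (j + 1) (by omega)).1.2 this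

lemma lt_of_sbRepr (ha : IsGeneracci s b a) (hb : 0 < b) {i m : ℕ} (hi : 0 < i)
    (h : SBRepr s b a i m) : m < a i := by
  induction i using Nat.strong_induction_on generalizing m with
  | _ i IH =>
    obtain ⟨j, rfl⟩ : ∃ j, i = j + 1 := ⟨i - 1, by omega⟩
    rcases Nat.eq_zero_or_pos j with rfl | hj
    · rw [h.eq_zero_of_one]; exact (ha.2 1 le_rfl).1.1
    have hstep := ha.1 j hj
    rcases h.succ_cases hb with h | ⟨m', h', rfl⟩
    · exact (IH j (by omega) hj h).trans hstep
    · have := IH _ (by have := sbReach_lt (s := s) hb hj; omega) (by omega) h'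
      have := ha.add_le_succ hb hj
      omega

lemma apply_succ (ha : IsGeneracci s b a) (hb : 0 < b) {j : ℕ} (hj : 0 < j) :
    a (j + 1) = a j + a (sbReach s b j + 1) := by
  refine le_antisymm ((ha.2 (j + 1) (by omega)).2 ⟨?_, fun h => ?_⟩) (ha.add_le_succ hb hj)
  · have := (ha.2 j hj).1.1; omega
  rcases h.succ_cases hb with h | ⟨m', h', hm'⟩
  · have := ha.lt_of_sbRepr hb hj h; omega
  · rw [← Nat.add_left_cancel hm'] at h'
    exact (ha.2 _ (by omega)).1.2 h'

lemma apply_mul_add (ha : IsGeneracci s b a) (hb : 0 < b) (k : ℕ) {r : ℕ} (hr : r ≤ b) :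
    a (k * b + r + 1) = a (k * b + 1) + r * a ((k - s) * b + 1) := by
  induction r with
  | zero => simp
  | succ r ih =>
    rw [ha.apply_succ hb (j := k * b + (r + 1)) (by omega), sbReach_mul_add hb r.succ_pos hr,
      ← add_assoc, ih (by omega)]
    ring

end IsGeneracci

theorem stmt_0_general (s b : ℕ) (hb : 1 ≤ b) (a : ℕ → ℕ)
    (ha : IsGeneracci s b a) :
    ∀ n : ℕ, (s + 1) * b + 1 < n → a n = a (n - b) + b * a (n - (s + 1) * b) := by
  intro n hn
  obtain ⟨t, r, hrb, rfl⟩ : ∃ t r, r ≤ b ∧ n = (s + t + 1) * b + r + 1 := by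
    have hq : s + 1 ≤ (n - 1) / b := (Nat.le_div_iff_mul_le hb).2 (by omega)
    obtain ⟨t, ht⟩ := Nat.exists_eq_add_of_le hq
    refine ⟨t, (n - 1) % b, (Nat.mod_lt _ hb).le, ?_⟩
    have := Nat.div_add_mod (n - 1) b
    rw [ht] at this
    have : (s + t + 1) * b = b * (s + 1 + t) := by ring
    omega
  have hsplit : (s + t) * b + b = (s + t + 1) * b := by ring
  have hlow : (s + 1) * b + t * b = (s + t + 1) * b := by ring
  rw [show (s + t + 1) * b + r + 1 - b = (s + t) * b + r + 1 by omega,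
    show (s + t + 1) * b + r + 1 - (s + 1) * b = t * b + r + 1 by omega]
  have top := ha.apply_mul_add hb (s + t + 1) hrb
  have top₀ := ha.apply_mul_add hb (s + t) le_rfl
  have prev := ha.apply_mul_add hb (s + t) hrb
  have bot := ha.apply_mul_add hb t hrb
  have bot₀ := ha.apply_mul_add hb t le_rfl
  rw [show s + t + 1 - s = t + 1 by omega] at top
  rw [hsplit, Nat.add_sub_cancel_left] at top₀
  rw [Nat.add_sub_cancel_left] at prev
  rw [show t * b + b = (t + 1) * b by ring] at bot₀
  rw [top, top₀, prev, bot, bot₀]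
  ring

theorem stmt_0 (s b : ℕ) (hs : 1 ≤ s) (hb : 1 ≤ b) (a : ℕ → ℕ)
    (ha : IsGeneracci s b a) :
    ∀ n : ℕ, (s + 1) * b + 1 < n → a n = a (n - b) + b * a (n - (s + 1) * b) :=
  stmt_0_general s b hb a ha
end

section
/- Let {q_n} be the Fibonacci Quilt sequence. For all n ≥ 6, q_{n+1} = q_n + q_{n−4}. -/
open scoped BigOperators

/-- A finite set of indices is FQ-legal: distinct indices never differ by 1, 3 or 4,
and the set does not contain both 1 and 3. -/
def FQLegal (L : Finset ℕ) : Prop :=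
  (∀ i ∈ L, ∀ j ∈ L, i ≠ j →
    max i j - min i j ≠ 1 ∧ max i j - min i j ≠ 3 ∧ max i j - min i j ≠ 4) ∧
  ¬ (1 ∈ L ∧ 3 ∈ L)

/-- `m` has an FQ-legal decomposition using only `q_1, …, q_{i-1}`. -/
def FQRepr (q : ℕ → ℕ) (i m : ℕ) : Prop :=
  ∃ L : Finset ℕ, (∀ j ∈ L, 1 ≤ j ∧ j < i) ∧ FQLegal L ∧ (∑ j ∈ L, q j) = m

/-- `q` (1-indexed) is the Fibonacci Quilt sequence: `q 1 = 1` and for `i ≥ 2`,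
`q i` is the smallest positive integer having no FQ-legal decomposition using
`{q_1, …, q_{i-1}}`. -/
def IsFQSeq (q : ℕ → ℕ) : Prop :=
  q 1 = 1 ∧ ∀ i, 2 ≤ i → IsLeast {m : ℕ | 0 < m ∧ ¬ FQRepr q i m} (q i)

/-!
The defining property determines the sequence, so it suffices to check it for `fq`, the
sequence given by the recurrence and the initial values 1, 2, 3, 4, 5, 7. Everything rests on
peeling off the largest index `i` of a legal set: the other indices are `i - 2` or at most
`i - 5`, and at most `i - 7` once `i - 2` is present. By induction on the stage this shows that
legal sums of indices `< i` stay below `fq (i + 2)`, that `fq i` is not such a sum (using also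
`fq i = fq (i - 2) + fq (i - 3)`), and that every smaller positive number is one: below
`fq (i - 1)` by induction, and beyond it by adding the index `i - 1` to a decomposition of the
difference, which is less than `fq (i - 5)`.
-/

instance : DecidablePred FQLegal := fun _ => by unfold FQLegal; infer_instance

theorem fqRepr_iff_exists_mem_powerset {q : ℕ → ℕ} {i m : ℕ} :
    FQRepr q i m ↔ ∃ L ∈ (Finset.Ico 1 i).powerset, FQLegal L ∧ ∑ j ∈ L, q j = m := by
  simp only [FQRepr, Finset.mem_powerset, Finset.subset_iff, Finset.mem_Ico]

instance (q : ℕ → ℕ) (i m : ℕ) : Decidable (FQRepr q i m) :=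
  decidable_of_iff _ fqRepr_iff_exists_mem_powerset.symm

namespace FQLegal

variable {L : Finset ℕ}

theorem mono {L' : Finset ℕ} (hL : FQLegal L) (h : L' ⊆ L) : FQLegal L' :=
  ⟨fun i hi j hj hij => hL.1 i (h hi) j (h hj) hij, fun h13 => hL.2 ⟨h h13.1, h h13.2⟩⟩

theorem sub_ne (hL : FQLegal L) {a b : ℕ} (ha : a ∈ L) (hb : b ∈ L) (hba : b < a) :
    a - b ≠ 1 ∧ a - b ≠ 3 ∧ a - b ≠ 4 := by
  have := hL.1 a ha b hb hba.ne'
  rwa [max_eq_left hba.le, min_eq_right hba.le] at this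

theorem insert (hL : FQLegal L) {a : ℕ} (ha : ∀ j ∈ L, j + 5 ≤ a) : FQLegal (insert a L) := by
  refine ⟨fun x hx y hy hxy => ?_, fun ⟨h1, h3⟩ => ?_⟩
  · rw [Finset.mem_insert] at hx hy
    rcases hx with rfl | hx <;> rcases hy with rfl | hy
    · exact absurd rfl hxy
    · have := ha y hy; omega
    · have := ha x hx; omega
    · exact hL.1 x hx y hy hxy
  · rw [Finset.mem_insert] at h1 h3
    rcases h1 with rfl | h1
    · rcases h3 with h3 | h3
      · omega
      · have := ha 3 h3; omega
    · rcases h3 with rfl | h3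
      · have := ha 1 h1; omega
      · exact hL.2 ⟨h1, h3⟩

end FQLegal

namespace FQRepr

variable {q : ℕ → ℕ} {i m : ℕ}

theorem mono {i' : ℕ} (h : FQRepr q i m) (hi : i ≤ i') : FQRepr q i' m := by
  obtain ⟨L, hL, hleg, hsum⟩ := h
  exact ⟨L, fun j hj => ⟨(hL j hj).1, (hL j hj).2.trans_le hi⟩, hleg, hsum⟩

theorem eq_zero (h : FQRepr q 0 m) : m = 0 := by
  obtain ⟨L, hL, -, rfl⟩ := h
  exact Finset.sum_eq_zero fun j hj => absurd (hL j hj) (by omega)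

theorem add_of_add_four_le {j : ℕ} (h : FQRepr q j m) (hj : j + 4 ≤ i) :
    FQRepr q (i + 1) (q i + m) := by
  obtain ⟨L, hL, hleg, rfl⟩ := h
  have hiL : i ∉ L := fun hi => by have := hL i hi; omega
  refine ⟨insert i L, fun k hk => ?_, hleg.insert fun k hk => ?_, Finset.sum_insert hiL⟩
  · rcases Finset.mem_insert.1 hk with rfl | hk
    · omega
    · have := hL k hk
      have : k ≠ i := fun h => hiL (h ▸ hk)
      omega
  · have := hL k hk; omega

theorem cases_succ (h : FQRepr q (i + 1) m) :
    FQRepr q i m ∨ (∃ m', FQRepr q (i - 4) m' ∧ m = q i + m') ∨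
      ∃ m', FQRepr q (i - 6) m' ∧ m = q i + q (i - 2) + m' := by
  obtain ⟨L, hL, hleg, rfl⟩ := h
  by_cases hi : i ∈ L
  · right
    have hrest : ∀ j ∈ L.erase i, 1 ≤ j ∧ (j = i - 2 ∨ j < i - 4) := fun j hj => by
      obtain ⟨hji, hj⟩ := Finset.mem_erase.1 hj
      have := hL j hj
      have := hleg.sub_ne hi hj (by omega)
      omega
    rw [← Finset.add_sum_erase L q hi]
    by_cases hi2 : i - 2 ∈ L
    · have hi2' : i - 2 ∈ L.erase i := Finset.mem_erase.2 ⟨by have := hL i hi; omega, hi2⟩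
      refine Or.inr ⟨_, ⟨(L.erase i).erase (i - 2), fun j hj => ?_,
        hleg.mono ((Finset.erase_subset _ _).trans (Finset.erase_subset _ _)), rfl⟩,
        by rw [← Finset.add_sum_erase _ q hi2', add_assoc]⟩
      obtain ⟨hji2, hj⟩ := Finset.mem_erase.1 hj
      have := hrest j hj
      have := hleg.sub_ne hi2 (Finset.mem_of_mem_erase hj) (by omega)
      omega
    · refine Or.inl ⟨_, ⟨L.erase i, fun j hj => ?_, hleg.mono (Finset.erase_subset _ _), rfl⟩,
        rfl⟩
      have := hrest j hj
      have : j ≠ i - 2 := fun h => hi2 (h ▸ Finset.mem_of_mem_erase hj)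
      omega
  · refine Or.inl ⟨L, fun j hj => ?_, hleg, rfl⟩
    have := hL j hj
    have : j ≠ i := fun h => hi (h ▸ hj)
    omega

end FQRepr

theorem fqRepr_succ_self {q : ℕ → ℕ} {i : ℕ} (hi : 1 ≤ i) : FQRepr q (i + 1) (q i) := by
  refine ⟨{i}, fun j hj => ?_, ⟨fun x hx y hy hxy => ?_, fun h13 => ?_⟩, Finset.sum_singleton _ _⟩
  · rw [Finset.mem_singleton] at hj; omega
  · rw [Finset.mem_singleton] at hx hy; exact absurd (hx.trans hy.symm) hxy
  · simp only [Finset.mem_singleton] at h13; omega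

theorem fqRepr_congr {q q' : ℕ → ℕ} {i m : ℕ} (h : ∀ j, 1 ≤ j → j < i → q j = q' j) :
    FQRepr q i m ↔ FQRepr q' i m := by
  suffices ∀ L : Finset ℕ, (∀ j ∈ L, 1 ≤ j ∧ j < i) → ∑ j ∈ L, q j = ∑ j ∈ L, q' j by
    exact exists_congr fun L => and_congr_right fun hL => by rw [this L hL]
  exact fun L hL => Finset.sum_congr rfl fun j hj => h j (hL j hj).1 (hL j hj).2

theorem IsFQSeq.eq {q q' : ℕ → ℕ} (hq : IsFQSeq q) (hq' : IsFQSeq q') :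
    ∀ i, 1 ≤ i → q i = q' i := by
  intro i hi
  induction i using Nat.strong_induction_on with
  | _ i ih =>
    rcases hi.eq_or_lt with rfl | hi
    · exact hq.1.trans hq'.1.symm
    have hset : {m | 0 < m ∧ ¬ FQRepr q i m} = {m | 0 < m ∧ ¬ FQRepr q' i m} := by
      ext m
      simp only [Set.mem_ofPred_eq, fqRepr_congr fun j hj hji => ih j hji hj]
    exact (hq.2 i hi).unique (hset ▸ hq'.2 i hi)

-- `fq 0` lies outside the sequence; the value 0 keeps `fq` strictly monotone.
def fq : ℕ → ℕ
  | 0 => 0 | 1 => 1 | 2 => 2 | 3 => 3 | 4 => 4 | 5 => 5 | 6 => 7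
  | n + 7 => fq (n + 6) + fq (n + 2)

theorem fq_add_seven (k : ℕ) : fq (k + 7) = fq (k + 6) + fq (k + 2) := rfl

theorem fq_add_five : ∀ k, fq (k + 5) = fq (k + 3) + fq (k + 2)
  | 0 | 1 | 2 | 3 => rfl
  | k + 4 => by
    have h9 : fq (k + 9) = fq (k + 8) + fq (k + 4) := fq_add_seven (k + 2)
    have h8 : fq (k + 8) = fq (k + 6) + fq (k + 5) := fq_add_five (k + 3)
    have h7 : fq (k + 7) = fq (k + 5) + fq (k + 4) := fq_add_five (k + 2)
    show fq (k + 9) = fq (k + 7) + fq (k + 6)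
    omega

theorem fq_lt_succ : ∀ n, fq n < fq (n + 1)
  | 0 | 1 | 2 | 3 | 4 | 5 => by decide
  | k + 6 => by
    have : fq (k + 1) < fq (k + 2) := fq_lt_succ (k + 1)
    have : fq (k + 7) = fq (k + 6) + fq (k + 2) := fq_add_seven k
    show fq (k + 6) < fq (k + 7)
    omega

theorem fq_strictMono : StrictMono fq := strictMono_nat_of_lt_succ fq_lt_succ

theorem lt_fq_add_two_of_fqRepr {i v : ℕ} (h : FQRepr fq i v) : v < fq (i + 2) := by
  induction i using Nat.strong_induction_on generalizing v with
  | _ i ih =>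
    rcases i with _ | j
    · rw [h.eq_zero]; decide
    show v < fq (j + 3)
    rcases h.cases_succ with h | ⟨v, hv, rfl⟩ | ⟨v, hv, rfl⟩
    · exact (ih j (by omega) h).trans (fq_lt_succ _)
    · have := ih (j - 4) (by omega) hv
      have : fq j + fq (j - 4 + 2) ≤ fq (j + 3) := by
        rcases lt_or_ge j 6 with hj | hj
        · interval_cases j <;> decide
        obtain ⟨k, rfl⟩ := Nat.exists_eq_add_of_le' hj
        have : fq (k + 6) ≤ fq (k + 8) := fq_strictMono.monotone (by omega)
        have h9 : fq (k + 9) = fq (k + 8) + fq (k + 4) := fq_add_seven (k + 2)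
        rw [show k + 6 - 4 + 2 = k + 4 by omega, h9]
        omega
      omega
    · have := ih (j - 6) (by omega) hv
      have : fq j + fq (j - 2) + fq (j - 6 + 2) ≤ fq (j + 3) := by
        rcases lt_or_ge j 6 with hj | hj
        · interval_cases j <;> decide
        obtain ⟨k, rfl⟩ := Nat.exists_eq_add_of_le' hj
        have : fq (k + 2) ≤ fq (k + 5) := fq_strictMono.monotone (by omega)
        have h9 : fq (k + 9) = fq (k + 7) + fq (k + 6) := fq_add_five (k + 4)
        have h7 : fq (k + 7) = fq (k + 5) + fq (k + 4) := fq_add_five (k + 2)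
        rw [show k + 6 - 2 = k + 4 by omega, show k + 6 - 6 + 2 = k + 2 by omega, h9, h7]
        omega
      omega

theorem not_fqRepr_fq_add_ten (k : ℕ) (h2 : ¬ FQRepr fq (k + 2) (fq (k + 2)))
    (h5 : ¬ FQRepr fq (k + 5) (fq (k + 5))) : ¬ FQRepr fq (k + 10) (fq (k + 10)) := by
  have r10 : fq (k + 10) = fq (k + 9) + fq (k + 5) := fq_add_seven (k + 3)
  have r9 : fq (k + 9) = fq (k + 8) + fq (k + 4) := fq_add_seven (k + 2)
  have s10 : fq (k + 10) = fq (k + 8) + fq (k + 7) := fq_add_five (k + 5)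
  have s8 : fq (k + 8) = fq (k + 6) + fq (k + 5) := fq_add_five (k + 3)
  have s7 : fq (k + 7) = fq (k + 5) + fq (k + 4) := fq_add_five (k + 2)
  have s6 : fq (k + 6) = fq (k + 4) + fq (k + 3) := fq_add_five (k + 1)
  have s5 : fq (k + 5) = fq (k + 3) + fq (k + 2) := fq_add_five k
  have : fq (k + 5) < fq (k + 7) := fq_strictMono (by omega)
  have : fq (k + 6) < fq (k + 7) := fq_strictMono (by omega)
  have : fq (k + 5) < fq (k + 8) := fq_strictMono (by omega)
  have : fq (k + 3) < fq (k + 6) := fq_strictMono (by omega)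
  -- Peel off the indices `k + 9`, `k + 8`, `k + 7` in turn: each remainder is either too large
  -- for its stage or is `fq (k + 5)` resp. `fq (k + 2)` at its own stage.
  intro h
  rcases h.cases_succ with h | ⟨v, hv, hT⟩ | ⟨v, _, hT⟩
  · rcases h.cases_succ with h | ⟨v, hv, hT⟩ | ⟨v, hv, hT⟩
    · rcases h.cases_succ with h | ⟨v, hv, hT⟩ | ⟨v, hv, hT⟩
      · have : fq (k + 10) < fq (k + 9) := lt_fq_add_two_of_fqRepr h
        omega
      · simp only [Nat.reduceSubDiff] at hv hT
        have : v < fq (k + 5) := lt_fq_add_two_of_fqRepr hv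
        omega
      · simp only [Nat.reduceSubDiff] at hv hT
        have : v < fq (k + 3) := lt_fq_add_two_of_fqRepr hv
        omega
    · simp only [Nat.reduceSubDiff] at hv hT
      have : v < fq (k + 6) := lt_fq_add_two_of_fqRepr hv
      omega
    · simp only [Nat.reduceSubDiff] at hv hT
      exact h2 (by convert hv using 1; omega)
  · simp only [Nat.reduceSubDiff] at hv hT
    exact h5 (by convert hv using 1; omega)
  · simp only [Nat.reduceSubDiff] at hT
    omega

set_option maxRecDepth 4000 in
theorem not_fqRepr_fq : ∀ i, ¬ FQRepr fq (i + 2) (fq (i + 2))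
  | 0 | 1 | 2 | 3 | 4 | 5 | 6 | 7 => by decide
  | k + 8 => not_fqRepr_fq_add_ten k (not_fqRepr_fq k) (not_fqRepr_fq (k + 3))

theorem fqRepr_of_pos_of_lt_fq {i m : ℕ} (hm : 0 < m) (h : m < fq i) : FQRepr fq i m := by
  induction i using Nat.strong_induction_on generalizing m with
  | _ i ih =>
    rcases lt_or_ge i 7 with hi | hi
    · exact (by decide : ∀ i < 7, ∀ m < fq i, 0 < m → FQRepr fq i m) i hi m h hm
    obtain ⟨k, rfl⟩ := Nat.exists_eq_add_of_le' hi
    rw [fq_add_seven] at h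
    rcases lt_trichotomy m (fq (k + 6)) with hlt | rfl | hgt
    · exact (ih (k + 6) (by omega) hm hlt).mono (by omega)
    · exact fqRepr_succ_self (by omega)
    · have := (ih (k + 2) (by omega) (Nat.sub_pos_of_lt hgt) (by omega)).add_of_add_four_le
        (i := k + 6) le_rfl
      rwa [Nat.add_sub_cancel' hgt.le] at this

theorem isFQSeq_fq : IsFQSeq fq := by
  refine ⟨rfl, fun i hi => ⟨⟨fq_strictMono (by omega : 0 < i), ?_⟩, fun m ⟨hm, hnr⟩ => ?_⟩⟩
  · obtain ⟨k, rfl⟩ := Nat.exists_eq_add_of_le' hi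
    exact not_fqRepr_fq k
  · exact not_lt.1 fun h => hnr (fqRepr_of_pos_of_lt_fq hm h)

theorem stmt_2 (q : ℕ → ℕ) (hq : IsFQSeq q) :
    ∀ n : ℕ, 6 ≤ n → q (n + 1) = q n + q (n - 4) := by
  intro n hn
  obtain ⟨k, rfl⟩ := Nat.exists_eq_add_of_le' hn
  have h := hq.eq isFQSeq_fq
  rw [h _ (by omega), h _ (by omega), h _ (by omega)]
  exact fq_add_seven k
end

section
/- Let s, b ≥ 1 be integers and y > 0 a real number, and consider the complex polynomial f(x) = 1 − x − b·y·x^{s+1}. Then (1) f has no repeated roots, and (2) f has a positive real root λ₁(y) satisfying 0 < λ₁(y) < 1 whose modulus is strictly smaller than the modulus of every other root of f. -/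
open Polynomial

/-- The polynomial `f(x) = 1 - x - b y x^{s+1}` over `ℂ`. -/
noncomputable def genPoly (s b : ℕ) (y : ℝ) : Polynomial ℂ :=
  C 1 - X - C ((b : ℂ) * (y : ℂ)) * X ^ (s + 1)

/-!
Put `c = b y > 0`, so that the roots of `f` are the solutions of `z + c z^{s+1} = 1`.
A common root of `f` and `f'` would satisfy `s z = s + 1` (eliminate `z^{s+1}`) and hence
`s^s + c (s+1)^{s+1} = 0`, which is absurd. On `[0, ∞)` the map `g(t) = t + c t^{s+1}` is strictly
increasing with `g(0) = 0 < 1 < g(1)`, so `g(λ) = 1` for a unique `λ ∈ (0, 1)`. If a root `z`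
has `‖z‖ ≤ λ`, then `1 = Re z + Re (c z^{s+1}) ≤ g(‖z‖) ≤ g(λ) = 1`; so `‖z‖ = λ` and
`Re z = ‖z‖`, i.e. `z = λ`.
-/

open scoped ComplexOrder

theorem Polynomial.nodup_roots_of_isRoot_not_isRoot_derivative {R : Type*} [CommRing R]
    [IsDomain R] [CharZero R] {p : R[X]} (h : ∀ t, p.IsRoot t → ¬p.derivative.IsRoot t) :
    p.roots.Nodup := by
  classical
  rcases eq_or_ne p 0 with rfl | hp
  · simp
  rw [Multiset.nodup_iff_count_le_one]
  intro t
  rw [count_roots, ← not_lt, one_lt_rootMultiplicity_iff_isRoot hp]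
  exact fun ⟨hroot, hderiv⟩ ↦ h t hroot hderiv

section

variable {s : ℕ} {c : ℝ}

theorem strictMonoOn_add_mul_pow (hc : 0 ≤ c) :
    StrictMonoOn (fun t : ℝ ↦ t + c * t ^ (s + 1)) (Set.Ici 0) := by
  intro t ht u _ htu
  have := pow_le_pow_left₀ ht htu.le (s + 1)
  dsimp only
  nlinarith

theorem exists_mem_Ioo_add_mul_pow_eq_one (hc : 0 < c) :
    ∃ t ∈ Set.Ioo (0 : ℝ) 1, t + c * t ^ (s + 1) = 1 := by
  have hcont : ContinuousOn (fun t : ℝ ↦ t + c * t ^ (s + 1)) (Set.Icc 0 1) := by fun_prop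
  have h1 : (1 : ℝ) ∈ Set.Ioo (0 + c * 0 ^ (s + 1)) (1 + c * 1 ^ (s + 1)) := by
    constructor <;> simp [hc]
  exact intermediate_value_Ioo zero_le_one hcont h1

theorem eq_of_add_mul_pow_eq_one_of_norm_le (hc : 0 ≤ c) {t : ℝ} (ht : 0 ≤ t)
    (hgt : t + c * t ^ (s + 1) = 1) {z : ℂ} (hz : z + c * z ^ (s + 1) = 1) (hzt : ‖z‖ ≤ t) :
    z = t := by
  have hre : z.re + (c * z ^ (s + 1)).re = 1 := by simpa using congrArg Complex.re hz
  have hnorm : ‖(c : ℂ) * z ^ (s + 1)‖ = c * ‖z‖ ^ (s + 1) := by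
    rw [norm_mul, norm_pow, Complex.norm_real, Real.norm_of_nonneg hc]
  have hre_z := Complex.re_le_norm z
  have hre_pow := hnorm ▸ Complex.re_le_norm (c * z ^ (s + 1))
  have hmono := (strictMonoOn_add_mul_pow (s := s) hc).monotoneOn (norm_nonneg z) ht hzt
  have hnorm_z : ‖z‖ = t :=
    (strictMonoOn_add_mul_pow hc).injOn (norm_nonneg z) ht (by linarith)
  have hz_re : z.re = ‖z‖ := by linarith
  have hz_nonneg : ((0 : ℝ) : ℂ) ≤ z := by simpa using Complex.re_eq_norm.mp hz_re
  rw [Complex.eq_re_of_ofReal_le hz_nonneg, hz_re, hnorm_z]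

theorem nodup_roots_one_sub_X_sub_C_mul_X_pow (hc : 0 < c) :
    (1 - X - C (c : ℂ) * X ^ (s + 1)).roots.Nodup := by
  refine nodup_roots_of_isRoot_not_isRoot_derivative fun z hz hz' ↦ ?_
  simp only [IsRoot, eval_sub, eval_one, eval_X, eval_mul, eval_C, eval_pow, eval_zero,
    derivative_sub, derivative_one, derivative_X, derivative_C_mul_X_pow, Nat.add_sub_cancel,
    Nat.cast_add, Nat.cast_one] at hz hz'
  have hsz : (s : ℂ) * z = s + 1 := by linear_combination (-(s : ℂ) - 1) * hz + z * hz'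
  have hzero : (((s : ℝ) ^ s + c * (s + 1) ^ (s + 1) : ℝ) : ℂ) = 0 := by
    push_cast
    rw [← hsz]
    linear_combination (-(s : ℂ) ^ s) * hz' + c * (s : ℂ) ^ s * z ^ s * hsz
  have hpos : 0 < (s : ℝ) ^ s + c * (s + 1) ^ (s + 1) := by positivity
  exact hpos.ne' (Complex.ofReal_eq_zero.mp hzero)

end

theorem isRoot_genPoly_iff {s b : ℕ} {y : ℝ} {z : ℂ} :
    (genPoly s b y).IsRoot z ↔ z + ((b * y : ℝ) : ℂ) * z ^ (s + 1) = 1 := by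
  simp only [IsRoot, genPoly, eval_sub, eval_C, eval_X, eval_mul, eval_pow, Complex.ofReal_mul,
    Complex.ofReal_natCast]
  constructor <;> intro h <;> linear_combination -h

theorem genPoly_eq (s b : ℕ) (y : ℝ) :
    genPoly s b y = 1 - X - C ((b * y : ℝ) : ℂ) * X ^ (s + 1) := by
  simp [genPoly]

theorem stmt_19_general (s b : ℕ) (hb : 1 ≤ b) (y : ℝ) (hy : 0 < y) :
    (genPoly s b y).roots.Nodup ∧
    ∃ lam1 : ℝ, 0 < lam1 ∧ lam1 < 1 ∧
      (genPoly s b y).IsRoot (lam1 : ℂ) ∧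
      ∀ z : ℂ, (genPoly s b y).IsRoot z → z ≠ (lam1 : ℂ) →
        lam1 < ‖z‖ := by
  have hc : 0 < (b : ℝ) * y := mul_pos (by exact_mod_cast hb) hy
  obtain ⟨lam, ⟨hlam0, hlam1⟩, hlam⟩ := exists_mem_Ioo_add_mul_pow_eq_one (s := s) hc
  refine ⟨genPoly_eq s b y ▸ nodup_roots_one_sub_X_sub_C_mul_X_pow hc, lam, hlam0, hlam1,
    isRoot_genPoly_iff.mpr (by exact_mod_cast hlam), fun z hz hne ↦ ?_⟩
  by_contra! hle
  exact hne <|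
    eq_of_add_mul_pow_eq_one_of_norm_le hc.le hlam0.le hlam (isRoot_genPoly_iff.mp hz) hle

theorem stmt_19 (s b : ℕ) (hs : 1 ≤ s) (hb : 1 ≤ b) (y : ℝ) (hy : 0 < y) :
    (genPoly s b y).roots.Nodup ∧
    ∃ lam1 : ℝ, 0 < lam1 ∧ lam1 < 1 ∧
      (genPoly s b y).IsRoot (lam1 : ℂ) ∧
      ∀ z : ℂ, (genPoly s b y).IsRoot z → z ≠ (lam1 : ℂ) →
        lam1 < ‖z‖ :=
  stmt_19_general s b hb y hy
end
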